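/- Let K be an algebraically closed field, σ₁, σ₂ K-linear automorphisms of 𝒞ₙ and 𝒞ₘ, and τ : 𝒞ₙ → 𝒞ₘ a K-linear functor with τσ₁ = σ₂τ. Let (x_{ij}) be any good basis for (𝒞ₙ,σ₁) with transition coefficients a_{ij} for σ₁. Suppose i,j ∈ [n] lie in different orbits A, B of the object permutation of σ₁, but τ(i) and τ(j) lie in the same orbit of the object permutation of σ₂. Then a_{ij}^k = 1 for every common multiple k of |A| and |B|. Furthermore, there exists a good basis for (𝒞ₙ,σ₁) with a_{ij} = 1. -/

import Mathlib

open CategoryTheory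

/-- The category `𝒞ₙ`: objects are `Fin n`, every hom-space is the one-dimensional
`K`-vector space `K`, and composition is multiplication in `K` (so the identity of
every object is `1 : K`). -/
def Cn (K : Type) (n : ℕ) : Type := Fin n

section CnSetup

variable {K : Type} [Field K] {n : ℕ}

instance : Category (Cn K n) where
  Hom _ _ := K
  id _ := (1 : K)
  comp f g := @HMul.hMul K K K _ f g
  id_comp f := @one_mul K _ f
  comp_id f := @mul_one K _ f
  assoc f g h := @mul_assoc K _ f g h

instance : Preadditive (Cn K n) where
  homGroup _ _ := inferInstanceAs (AddCommGroup K)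
  add_comp _ _ _ f f' g := @add_mul K _ _ _ f f' g
  comp_add _ _ _ f g g' := @mul_add K _ _ _ f g g'

instance : CategoryTheory.Linear K (Cn K n) where
  homModule _ _ := inferInstanceAs (Module K K)
  smul_comp _ _ _ r f g := @smul_mul_assoc K K _ _ _ r f g
  comp_smul _ _ _ f r g := @mul_smul_comm K K _ _ _ r f g

/-- The morphism `X ⟶ Y` of `𝒞ₙ` given by the scalar `r`.  In particular
`CnHom j i 1` is the canonical basic morphism `x_{ij} : j ⟶ i`. -/
def CnHom (X Y : Cn K n) (r : K) : X ⟶ Y := r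

/-- The scalar underlying a morphism of `𝒞ₙ`. -/
def toK {X Y : Cn K n} (f : X ⟶ Y) : K := f

end CnSetup

/-- A functor between `K`-linear categories is `K`-linear if it is additive on hom-spaces
and commutes with the action of `K` on hom-spaces. -/
def IsKLinearFunctor (K : Type) [Field K] {C D : Type*} [Category C] [Category D]
    [Preadditive C] [Preadditive D] [CategoryTheory.Linear K C] [CategoryTheory.Linear K D]
    (F : C ⥤ D) : Prop :=
  (∀ (X Y : C) (f g : X ⟶ Y), F.map (f + g) = F.map f + F.map g) ∧
  (∀ (X Y : C) (r : K) (f : X ⟶ Y), F.map (r • f) = r • F.map f)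

/-- `i` and `j` lie in the same orbit of the permutation `π`. -/
def SameOrbit {N : ℕ} (π : Equiv.Perm (Fin N)) (i j : Fin N) : Prop :=
  ∃ k : ℕ, (π ^ k) i = j

/-- The number of elements of the orbit of `i` under the permutation `π`. -/
noncomputable def orbitSize {N : ℕ} (π : Equiv.Perm (Fin N)) (i : Fin N) : ℕ :=
  Set.ncard {j | SameOrbit π i j}

/-- `x` is a multiplicative basis for `𝒞_N` whose transition coefficients for the
`K`-linear automorphism `σ` (with underlying object permutation `σp`) are the scalars
`a i j` (i.e. `σ (x_{ij}) = a_{ij} • x_{σ(i) σ(j)}`), and these coefficients equal `1`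
whenever `i` and `j` lie in the same `σp`-orbit: a *good basis* for `(𝒞_N, σ)`. -/
def IsGoodBasis {K : Type} [Field K] {N : ℕ} (σ : Cn K N ⥤ Cn K N)
    (σp : Equiv.Perm (Fin N)) (x a : Cn K N → Cn K N → K) : Prop :=
  (∀ i j, x i j ≠ 0) ∧ (∀ i j k, x i j * x j k = x i k) ∧ (∀ i j, a i j ≠ 0) ∧
  (∀ i j : Cn K N, σ.map (CnHom j i (x i j)) =
    CnHom (σ.obj j) (σ.obj i) (a i j * x (σp i) (σp j))) ∧
  (∀ i j : Fin N, SameOrbit σp i j → a i j = 1)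

section Helpers
open CategoryTheory
variable {K : Type} [Field K] {N : ℕ}

lemma toK_comp {X Y Z : Cn K N} (f : X ⟶ Y) (g : Y ⟶ Z) : toK (f ≫ g) = toK f * toK g := rfl
lemma toK_id (X : Cn K N) : toK (𝟙 X) = 1 := rfl
lemma toK_CnHom (X Y : Cn K N) (r : K) : toK (CnHom X Y r) = r := rfl
lemma CnHom_toK {X Y : Cn K N} (f : X ⟶ Y) : CnHom X Y (toK f) = f := rfl
lemma toK_eqToHom {X Y : Cn K N} (h : X = Y) : toK (eqToHom h) = 1 := by subst h; rfl
lemma toK_smul {X Y : Cn K N} (r : K) (f : X ⟶ Y) : toK (r • f) = r * toK f := rfl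
lemma CnHom_smul (X Y : Cn K N) (r s : K) : CnHom X Y (r * s) = r • CnHom X Y s := rfl
lemma hom_ext {X Y : Cn K N} (f g : X ⟶ Y) (h : toK f = toK g) : f = g := h
end Helpers
section Orbits
variable {N : ℕ} (π : Equiv.Perm (Fin N))

lemma sameOrbit_refl (i : Fin N) : SameOrbit π i i := ⟨0, by simp⟩

lemma sameOrbit_pow (u : ℕ) (i : Fin N) : SameOrbit π i ((π ^ u) i) := ⟨u, rfl⟩

variable {π}

lemma sameOrbit_trans {i j k : Fin N} (h1 : SameOrbit π i j) (h2 : SameOrbit π j k) :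
    SameOrbit π i k := by
  obtain ⟨u, hu⟩ := h1; obtain ⟨v, hv⟩ := h2
  exact ⟨v + u, by rw [pow_add, Equiv.Perm.mul_apply, hu, hv]⟩

lemma sameOrbit_symm {i j : Fin N} (h : SameOrbit π i j) : SameOrbit π j i := by
  obtain ⟨u, hu⟩ := h
  refine ⟨u * (orderOf π - 1), ?_⟩
  have he : u * (orderOf π - 1) + u = u * orderOf π := by
    have hN : 1 ≤ orderOf π := orderOf_pos π
    have h2 : orderOf π - 1 + 1 = orderOf π := Nat.succ_pred_eq_of_pos hN
    calc u * (orderOf π - 1) + u = u * (orderOf π - 1 + 1) := by ring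
    _ = u * orderOf π := by rw [h2]
  have h1 : (π ^ (u * (orderOf π - 1))) ((π ^ u) i) = (π ^ (u * orderOf π)) i := by
    rw [← Equiv.Perm.mul_apply, ← pow_add, he]
  rw [hu] at h1
  rw [h1, mul_comm, pow_mul, pow_orderOf_eq_one, one_pow, Equiv.Perm.one_apply]

lemma orbitSize_eq_minimalPeriod (i : Fin N) :
    orbitSize π i = Function.minimalPeriod ⇑π i := by
  have hmem : i ∈ Function.periodicPts ⇑π := by
    refine ⟨orderOf π, orderOf_pos π, ?_⟩
    show (⇑π)^[orderOf π] i = i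
    rw [← Equiv.Perm.coe_pow, pow_orderOf_eq_one, Equiv.Perm.coe_one, id_eq]
  have hpos : 0 < Function.minimalPeriod ⇑π i :=
    Function.minimalPeriod_pos_of_mem_periodicPts hmem
  have hset : {j | SameOrbit π i j} =
      (fun t => (⇑π)^[t] i) '' (Set.Iio (Function.minimalPeriod ⇑π i)) := by
    ext w
    constructor
    · rintro ⟨k, rfl⟩
      refine ⟨k % Function.minimalPeriod ⇑π i, Nat.mod_lt _ hpos, ?_⟩
      show (⇑π)^[k % Function.minimalPeriod ⇑π i] i = (π ^ k) i
      rw [Function.iterate_mod_minimalPeriod_eq, Equiv.Perm.coe_pow]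
    · rintro ⟨t, _, rfl⟩
      exact ⟨t, (congrFun (Equiv.Perm.coe_pow π t) i).symm⟩
  rw [orbitSize, hset, Set.ncard_image_of_injOn Function.iterate_injOn_Iio_minimalPeriod,
    ← Finset.coe_Iio, Set.ncard_coe_finset, Nat.card_Iio]

lemma pow_apply_eq_iff_orbitSize_dvd {i : Fin N} {t : ℕ} :
    (π ^ t) i = i ↔ orbitSize π i ∣ t := by
  rw [orbitSize_eq_minimalPeriod, ← Function.isPeriodicPt_iff_minimalPeriod_dvd]
  show _ ↔ (⇑π)^[t] i = i
  rw [← Equiv.Perm.coe_pow]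

lemma orbitSize_pos (i : Fin N) : 0 < orbitSize π i := by
  rw [orbitSize_eq_minimalPeriod]
  refine Function.minimalPeriod_pos_of_mem_periodicPts ⟨orderOf π, orderOf_pos π, ?_⟩
  show (⇑π)^[orderOf π] i = i
  rw [← Equiv.Perm.coe_pow, pow_orderOf_eq_one, Equiv.Perm.coe_one, id_eq]

lemma pow_orbitSize_apply (i : Fin N) : (π ^ orbitSize π i) i = i :=
  pow_apply_eq_iff_orbitSize_dvd.2 dvd_rfl
end Orbits
section Arith

lemma prod_shift_of_periodic {K : Type} [Field K] (g : ℕ → K) (k : ℕ)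
    (hg : ∀ t, g t ≠ 0) (hper : ∀ t, g (t + k) = g t) :
    ∀ e : ℕ, (∏ t ∈ Finset.range k, g (t + e)) = ∏ t ∈ Finset.range k, g t := by
  intro e
  induction e with
  | zero => simp
  | succ e ih =>
    have h1 : (∏ t ∈ Finset.range k, g (t + (e + 1))) * g e
        = (∏ t ∈ Finset.range k, g (t + e)) * g e := by
      have hl : (∏ t ∈ Finset.range k, g (t + (e + 1))) * g e
          = ∏ t ∈ Finset.range (k + 1), g (t + e) := by
        rw [Finset.prod_range_succ']
        congr 1
        · apply Finset.prod_congr rfl; intro t _; congr 1; omega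
        · congr 1; omega
      have hr : (∏ t ∈ Finset.range (k + 1), g (t + e))
          = (∏ t ∈ Finset.range k, g (t + e)) * g e := by
        rw [Finset.prod_range_succ]
        congr 1
        rw [show k + e = e + k by omega, hper]
      rw [hl, hr]
    have := mul_right_cancel₀ (hg e) h1
    rw [this, ih]

lemma exists_mu_lam {K : Type} [Field K] (A B : ℕ) (hA : 0 < A) (hB : 0 < B)
    (a : Kˣ) (h : a ^ Nat.lcm A B = 1) :
    ∃ μ lam : Kˣ, μ ^ A = 1 ∧ lam ^ B = 1 ∧ μ * lam⁻¹ = a := by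
  set g := Nat.gcd A B with hg
  have hgpos : 0 < g := Nat.gcd_pos_of_pos_left B hA
  have hco : Nat.Coprime (A / g) (B / g) := Nat.coprime_div_gcd_div_gcd hgpos
  have hbez : (1 : ℤ) = (A / g : ℕ) * Nat.gcdA (A / g) (B / g)
      + (B / g : ℕ) * Nat.gcdB (A / g) (B / g) := by
    have := Nat.gcd_eq_gcd_ab (A / g) (B / g)
    rwa [hco] at this
  set s := Nat.gcdA (A / g) (B / g)
  set t := Nat.gcdB (A / g) (B / g)
  have hgl : g * Nat.lcm A B = A * B := Nat.gcd_mul_lcm A B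
  have hBA : ((B / g : ℕ) : ℤ) * (A : ℕ) = (Nat.lcm A B : ℤ) := by
    obtain ⟨b, hb⟩ := Nat.gcd_dvd_right A B
    rw [← hg] at hb
    have h1 : B / g = b := by rw [hb, Nat.mul_div_cancel_left _ hgpos]
    have h2 : Nat.lcm A B = b * A := by
      have : g * Nat.lcm A B = g * (b * A) := by rw [hgl, hb]; ring
      exact Nat.eq_of_mul_eq_mul_left hgpos this
    rw [h1, h2]
    push_cast; ring
  have hAB : ((A / g : ℕ) : ℤ) * (B : ℕ) = (Nat.lcm A B : ℤ) := by
    obtain ⟨b, hb⟩ := Nat.gcd_dvd_left A B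
    rw [← hg] at hb
    have h1 : A / g = b := by rw [hb, Nat.mul_div_cancel_left _ hgpos]
    have h2 : Nat.lcm A B = b * B := by
      have : g * Nat.lcm A B = g * (b * B) := by rw [hgl, hb]; ring
      exact Nat.eq_of_mul_eq_mul_left hgpos this
    rw [h1, h2]
    push_cast; ring
  have hL : a ^ (Nat.lcm A B : ℤ) = 1 := by rw [zpow_natCast, h]
  refine ⟨a ^ (t * ((B / g : ℕ) : ℤ)), a ^ (-(s * ((A / g : ℕ) : ℤ))), ?_, ?_, ?_⟩
  · rw [← zpow_natCast (a ^ (t * ((B / g : ℕ) : ℤ))) A, ← zpow_mul]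
    have : t * ((B / g : ℕ) : ℤ) * (A : ℕ) = (Nat.lcm A B : ℤ) * t := by
      rw [mul_assoc, hBA]; ring
    rw [this, zpow_mul, hL, one_zpow]
  · rw [← zpow_natCast _ B, ← zpow_mul]
    have : -(s * ((A / g : ℕ) : ℤ)) * (B : ℕ) = (Nat.lcm A B : ℤ) * (-s) := by
      rw [show -(s * ((A / g : ℕ) : ℤ)) * (B : ℕ) = -((((A / g : ℕ) : ℤ) * B) * s) by ring, hAB]
      ring
    rw [this, zpow_mul, hL, one_zpow]
  · rw [← zpow_neg, ← zpow_add, neg_neg]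
    have : t * ((B / g : ℕ) : ℤ) + s * ((A / g : ℕ) : ℤ) = 1 := by
      rw [hbez]; ring
    rw [this, zpow_one]

end Arith
section CConstruction

lemma exists_c {K : Type} [Field K] {N : ℕ} (π : Equiv.Perm (Fin N)) (i j : Fin N)
    (hdiff : ¬ SameOrbit π i j) (mu lm : K) (hmu : mu ≠ 0) (hlm : lm ≠ 0)
    (hmuA : mu ^ orbitSize π i = 1) (hlmB : lm ^ orbitSize π j = 1) :
    ∃ c : Fin N → K, (∀ w, c w ≠ 0) ∧ (∀ t : ℕ, c ((π ^ t) i) = mu ^ t) ∧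
      (∀ t : ℕ, c ((π ^ t) j) = lm ^ t) ∧
      (∀ u v, SameOrbit π u v → c u * (c (π u))⁻¹ = c v * (c (π v))⁻¹) := by
  classical
  have hfind : ∀ (z : Fin N) (ρ : K), ρ ^ orbitSize π z = 1 →
      ∀ (t : ℕ) (h : ∃ k : ℕ, (π ^ k) z = (π ^ t) z), ρ ^ (Nat.find h) = ρ ^ t := by
    intro z ρ hρ t h
    have h1 : (π ^ Nat.find h) z = (π ^ t) z := Nat.find_spec h
    have h2 : Nat.find h ≤ t := Nat.find_min' h rfl
    have h3 : (π ^ (t - Nat.find h)) z = z := by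
      apply (π ^ Nat.find h).injective
      rw [← Equiv.Perm.mul_apply, ← pow_add, Nat.add_sub_cancel' h2, h1]
    obtain ⟨d, hd⟩ := pow_apply_eq_iff_orbitSize_dvd.1 h3
    have he : Nat.find h + (t - Nat.find h) = t := by omega
    have h4 : ρ ^ t = ρ ^ Nat.find h := by
      calc ρ ^ t = ρ ^ (Nat.find h + (t - Nat.find h)) := by rw [he]
      _ = ρ ^ Nat.find h := by rw [pow_add, hd, pow_mul, hρ, one_pow, mul_one]
    rw [h4]
  set c : Fin N → K := fun w => if h : SameOrbit π i w then mu ^ (Nat.find h)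
    else if h' : SameOrbit π j w then lm ^ (Nat.find h') else 1 with hc
  have hcA : ∀ t : ℕ, c ((π ^ t) i) = mu ^ t := by
    intro t
    have h : SameOrbit π i ((π ^ t) i) := ⟨t, rfl⟩
    rw [hc]
    simp only [dif_pos h]
    exact hfind i mu hmuA t h
  have hcB : ∀ t : ℕ, c ((π ^ t) j) = lm ^ t := by
    intro t
    have hni : ¬ SameOrbit π i ((π ^ t) j) := fun hcon =>
      hdiff (sameOrbit_trans hcon (sameOrbit_symm (sameOrbit_pow π t j)))
    have h : SameOrbit π j ((π ^ t) j) := ⟨t, rfl⟩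
    rw [hc]
    simp only [dif_neg hni, dif_pos h]
    exact hfind j lm hlmB t h
  have hcO : ∀ w, ¬ SameOrbit π i w → ¬ SameOrbit π j w → c w = 1 := by
    intro w h1 h2
    rw [hc]
    simp only [dif_neg h1, dif_neg h2]
  have hc0 : ∀ w, c w ≠ 0 := by
    intro w
    rw [hc]
    dsimp only
    split_ifs
    · exact pow_ne_zero _ hmu
    · exact pow_ne_zero _ hlm
    · exact one_ne_zero
  refine ⟨c, hc0, hcA, hcB, ?_⟩
  -- ratio lemma
  have hRA : ∀ t : ℕ, c ((π ^ t) i) * (c (π ((π ^ t) i)))⁻¹ = mu⁻¹ := by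
    intro t
    have hps : π ((π ^ t) i) = (π ^ (t + 1)) i := by
      rw [pow_succ']; rfl
    rw [hps, hcA t, hcA (t + 1), pow_succ, mul_inv, ← mul_assoc,
      mul_inv_cancel₀ (pow_ne_zero t hmu), one_mul]
  have hRB : ∀ t : ℕ, c ((π ^ t) j) * (c (π ((π ^ t) j)))⁻¹ = lm⁻¹ := by
    intro t
    have hps : π ((π ^ t) j) = (π ^ (t + 1)) j := by
      rw [pow_succ']; rfl
    rw [hps, hcB t, hcB (t + 1), pow_succ, mul_inv, ← mul_assoc,
      mul_inv_cancel₀ (pow_ne_zero t hlm), one_mul]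
  intro u v huv
  by_cases hiu : SameOrbit π i u
  · have hiv : SameOrbit π i v := sameOrbit_trans hiu huv
    obtain ⟨t, rfl⟩ := hiu
    obtain ⟨t', rfl⟩ := hiv
    rw [hRA t, hRA t']
  · by_cases hju : SameOrbit π j u
    · have hjv : SameOrbit π j v := sameOrbit_trans hju huv
      obtain ⟨t, rfl⟩ := hju
      obtain ⟨t', rfl⟩ := hjv
      rw [hRB t, hRB t']
    · -- neither orbit
      have hiv : ¬ SameOrbit π i v := fun hcon =>
        hiu (sameOrbit_trans hcon (sameOrbit_symm huv))
      have hjv : ¬ SameOrbit π j v := fun hcon =>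
        hju (sameOrbit_trans hcon (sameOrbit_symm huv))
      have hipu : ¬ SameOrbit π i (π u) := fun hcon => hiu
        (sameOrbit_trans hcon (sameOrbit_symm (by simpa using sameOrbit_pow π 1 u)))
      have hjpu : ¬ SameOrbit π j (π u) := fun hcon => hju
        (sameOrbit_trans hcon (sameOrbit_symm (by simpa using sameOrbit_pow π 1 u)))
      have hipv : ¬ SameOrbit π i (π v) := fun hcon => hiv
        (sameOrbit_trans hcon (sameOrbit_symm (by simpa using sameOrbit_pow π 1 v)))
      have hjpv : ¬ SameOrbit π j (π v) := fun hcon => hjv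
        (sameOrbit_trans hcon (sameOrbit_symm (by simpa using sameOrbit_pow π 1 v)))
      rw [hcO u hiu hju, hcO v hiv hjv, hcO (π u) hipu hjpu, hcO (π v) hipv hjpv]

end CConstruction
section MapHelpers
open CategoryTheory

lemma map_CnHom_mul {K : Type} [Field K] {n m : ℕ} (F : Cn K n ⥤ Cn K m)
    (hF : IsKLinearFunctor K F) (X Y : Cn K n) (r s : K) :
    toK (F.map (CnHom X Y (r * s))) = r * toK (F.map (CnHom X Y s)) := by
  rw [CnHom_smul, hF.2 X Y r (CnHom X Y s), toK_smul]

end MapHelpers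
/-- **Lemma (transition coefficients collapsing under `τ`).**  Suppose `K` is algebraically
closed, `τ σ₁ = σ₂ τ`, and `(x, a)` is a good basis for `(𝒞ₙ, σ₁)`.  If `i, j` lie in
different `σ₁`-orbits `A, B` but `τ(i), τ(j)` lie in the same `σ₂`-orbit, then
`a i j ^ k = 1` for every common multiple `k` of `|A|` and `|B|`; furthermore there is a
good basis for `(𝒞ₙ, σ₁)` with `a i j = 1`. -/
theorem stmt14 (K : Type) [Field K] [IsAlgClosed K] (n m : ℕ)
    (σ₁ : Cn K n ⥤ Cn K n) (σ₂ : Cn K m ⥤ Cn K m)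
    (hσ₁l : IsKLinearFunctor K σ₁) (hσ₂l : IsKLinearFunctor K σ₂)
    (hσ₁a : ∃ F : Cn K n ⥤ Cn K n, σ₁ ⋙ F = 𝟭 (Cn K n) ∧ F ⋙ σ₁ = 𝟭 (Cn K n))
    (hσ₂a : ∃ F : Cn K m ⥤ Cn K m, σ₂ ⋙ F = 𝟭 (Cn K m) ∧ F ⋙ σ₂ = 𝟭 (Cn K m))
    (σ₁p : Equiv.Perm (Fin n)) (hobj₁ : ∀ i : Cn K n, σ₁.obj i = σ₁p i)
    (σ₂p : Equiv.Perm (Fin m)) (hobj₂ : ∀ i : Cn K m, σ₂.obj i = σ₂p i)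
    (τ : Cn K n ⥤ Cn K m) (hτl : IsKLinearFunctor K τ)
    (hcomm : σ₁ ⋙ τ = τ ⋙ σ₂)
    (x a : Cn K n → Cn K n → K) (hx : IsGoodBasis σ₁ σ₁p x a)
    (i j : Fin n) (hdiff : ¬ SameOrbit σ₁p i j)
    (hsame : SameOrbit σ₂p (τ.obj i) (τ.obj j)) :
    (∀ k : ℕ, orbitSize σ₁p i ∣ k → orbitSize σ₁p j ∣ k → a i j ^ k = 1) ∧
    (∃ x' a' : Cn K n → Cn K n → K, IsGoodBasis σ₁ σ₁p x' a' ∧ a' i j = 1) := by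
  obtain ⟨hx1, hx2, hx3, hx4, hx5⟩ := hx
  -- x u u = 1
  have hxii : ∀ u : Fin n, x u u = 1 := by
    intro u
    have := hx2 u u u
    have h := hx1 u u
    field_simp at this ⊢
    exact mul_right_cancel₀ h (by rw [this, one_mul])
  -- cocycle for a
  have hacoc : ∀ u v w : Fin n, a u w = a u v * a v w := by
    intro u v w
    have e1 : (CnHom w v (x v w) ≫ CnHom v u (x u v)) = CnHom (w : Cn K n) u (x u w) := by
      apply hom_ext
      erw [toK_comp, toK_CnHom, toK_CnHom, toK_CnHom, mul_comm]
      exact hx2 u v w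
    have e2 := congrArg toK (congrArg σ₁.map e1.symm)
    erw [σ₁.map_comp, toK_comp, hx4 u w, hx4 v w, hx4 u v, toK_CnHom, toK_CnHom, toK_CnHom] at e2
    have hmul : x (σ₁p v) (σ₁p w) * x (σ₁p u) (σ₁p v) = x (σ₁p u) (σ₁p w) := by
      rw [mul_comm]; exact hx2 _ _ _
    apply mul_right_cancel₀ (hx1 (σ₁p u) (σ₁p w))
    rw [e2, ← hmul]; ring
  have haconst : ∀ t : ℕ, a ((σ₁p ^ t) i) ((σ₁p ^ t) j) = a i j := by
    intro t
    have h1 : a ((σ₁p ^ t) i) i = 1 := hx5 _ _ (sameOrbit_symm (sameOrbit_pow σ₁p t i))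
    have h2 : a j ((σ₁p ^ t) j) = 1 := hx5 _ _ (sameOrbit_pow σ₁p t j)
    rw [hacoc ((σ₁p ^ t) i) i ((σ₁p ^ t) j), h1, one_mul, hacoc i j ((σ₁p ^ t) j), h2, mul_one]
  -- T and S
  set T : Fin n → Fin n → K := fun u v => toK (τ.map (CnHom v u (x u v))) with hT
  set S : Fin m → Fin m → K := fun p q => toK (σ₂.map (CnHom q p (1 : K))) with hS
  have hScoc : ∀ p q r : Fin m, S q r * S p q = S p r := by
    intro p q r
    have e1 : (CnHom r q (1 : K) ≫ CnHom q p (1 : K)) = CnHom (r : Cn K m) p (1 : K) := by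
      apply hom_ext
      show (1 : K) * 1 = 1
      rw [one_mul]
    have e2 := congrArg toK (congrArg σ₂.map e1)
    erw [σ₂.map_comp, toK_comp] at e2
    exact e2
  have hSid : ∀ p : Fin m, S p p = 1 := by
    intro p
    have h1 : (CnHom p p (1 : K)) = 𝟙 (show Cn K m from p) := rfl
    rw [hS]
    simp only [h1, σ₂.map_id, toK_id]
    erw [σ₂.map_id, toK_id]
  have hSne : ∀ p q : Fin m, S p q ≠ 0 := by
    intro p q h0
    have h1 := hScoc q p q
    rw [hSid q, h0, zero_mul] at h1
    exact one_ne_zero h1.symm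
  have hTinv : ∀ u v : Fin n, T u v * T v u = 1 := by
    intro u v
    have e1 : (CnHom v u (x u v) ≫ CnHom u v (x v u)) = 𝟙 (show Cn K n from v) := by
      apply hom_ext
      erw [toK_comp, toK_CnHom, toK_CnHom, toK_id, hx2 u v u, hxii u]
    have e2 := congrArg toK (congrArg τ.map e1)
    erw [τ.map_comp, toK_comp, τ.map_id, toK_id] at e2
    exact e2
  have hTne : ∀ u v : Fin n, T u v ≠ 0 := by
    intro u v h0
    have h1 := hTinv u v
    rw [h0, zero_mul] at h1
    exact one_ne_zero h1.symm
  -- main relation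
  have hmain : ∀ u v : Fin n, a u v * T (σ₁p u) (σ₁p v) = T u v * S (τ.obj u) (τ.obj v) := by
    intro u v
    have h := Functor.congr_hom hcomm (CnHom v u (x u v))
    have h' := congrArg toK h
    rw [toK_comp, toK_comp, toK_eqToHom, toK_eqToHom, one_mul, mul_one] at h'
    change toK (τ.map (σ₁.map (CnHom v u (x u v)))) = toK (σ₂.map (τ.map (CnHom v u (x u v)))) at h'
    rw [hx4 u v, map_CnHom_mul τ hτl _ _ (a u v) (x (σ₁p u) (σ₁p v)), hobj₁ u, hobj₁ v] at h'
    have hrw : τ.map (CnHom v u (x u v)) = CnHom (τ.obj v) (τ.obj u) (T u v * 1) := by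
      rw [mul_one]; rfl
    rw [hrw, map_CnHom_mul σ₂ hσ₂l _ _ (T u v) 1] at h'
    exact h'
  -- object commutation
  have hobjτ : ∀ w : Fin n, τ.obj (σ₁p w) = σ₂p (τ.obj w) := by
    intro w
    have h := Functor.congr_obj hcomm w
    change τ.obj (σ₁.obj w) = σ₂.obj (τ.obj w) at h
    rw [hobj₁ w, hobj₂ (τ.obj w)] at h
    exact h
  have hobjτk : ∀ (k : ℕ) (w : Fin n), τ.obj ((σ₁p ^ k) w) = (σ₂p ^ k) (τ.obj w) := by
    intro k
    induction k with
    | zero => intro w; simp; rfl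
    | succ k ih =>
      intro w
      have h1 : (σ₁p ^ (k + 1)) w = (σ₁p ^ k) (σ₁p w) := by
        rw [pow_succ]; rfl
      have h2 : (σ₂p ^ (k + 1)) (τ.obj w) = (σ₂p ^ k) (σ₂p (τ.obj w)) := by
        rw [pow_succ]; rfl
      rw [h1, h2, ih (σ₁p w), hobjτ w]
  -- iterated relation
  have hpow : ∀ u : ℕ, a i j ^ u * T ((σ₁p ^ u) i) ((σ₁p ^ u) j)
      = T i j * ∏ t ∈ Finset.range u, S ((σ₂p ^ t) (τ.obj i)) ((σ₂p ^ t) (τ.obj j)) := by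
    intro u
    induction u with
    | zero => simp
    | succ u ih =>
      have h1 := hmain ((σ₁p ^ u) i) ((σ₁p ^ u) j)
      rw [haconst u] at h1
      have hpsi : (σ₁p ^ (u + 1)) i = σ₁p ((σ₁p ^ u) i) := by rw [pow_succ']; rfl
      have hpsj : (σ₁p ^ (u + 1)) j = σ₁p ((σ₁p ^ u) j) := by rw [pow_succ']; rfl
      calc a i j ^ (u + 1) * T ((σ₁p ^ (u + 1)) i) ((σ₁p ^ (u + 1)) j)
          = a i j ^ u * (a i j * T (σ₁p ((σ₁p ^ u) i)) (σ₁p ((σ₁p ^ u) j))) := by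
            rw [hpsi, hpsj, pow_succ]; ring
        _ = a i j ^ u * (T ((σ₁p ^ u) i) ((σ₁p ^ u) j)
              * S (τ.obj ((σ₁p ^ u) i)) (τ.obj ((σ₁p ^ u) j))) := by rw [h1]
        _ = (a i j ^ u * T ((σ₁p ^ u) i) ((σ₁p ^ u) j))
              * S ((σ₂p ^ u) (τ.obj i)) ((σ₂p ^ u) (τ.obj j)) := by
            rw [hobjτk u i, hobjτk u j]; ring
        _ = T i j * ∏ t ∈ Finset.range (u + 1),
              S ((σ₂p ^ t) (τ.obj i)) ((σ₂p ^ t) (τ.obj j)) := by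
            rw [ih, Finset.prod_range_succ]; ring
  -- part 1
  have hpart1 : ∀ k : ℕ, orbitSize σ₁p i ∣ k → orbitSize σ₁p j ∣ k → a i j ^ k = 1 := by
    intro k hki hkj
    have hfixi : (σ₁p ^ k) i = i := pow_apply_eq_iff_orbitSize_dvd.2 hki
    have hfixj : (σ₁p ^ k) j = j := pow_apply_eq_iff_orbitSize_dvd.2 hkj
    have hkey := hpow k
    rw [hfixi, hfixj] at hkey
    have hfixp : (σ₂p ^ k) (τ.obj i) = τ.obj i := by
      have h := hobjτk k i
      rw [hfixi] at h
      exact h.symm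
    have hb : ∀ z1 z2 : Fin m, S z1 z2 = S z1 (τ.obj i) * (S z2 (τ.obj i))⁻¹ := by
      intro z1 z2
      rw [eq_mul_inv_iff_mul_eq₀ (hSne z2 (τ.obj i))]
      have h1 := hScoc z1 z2 (τ.obj i)
      rw [mul_comm] at h1
      exact h1
    set bfun : ℕ → K := fun t => S ((σ₂p ^ t) (τ.obj i)) (τ.obj i) with hbfun
    have hbne : ∀ t, bfun t ≠ 0 := fun t => hSne _ _
    have hbper : ∀ t, bfun (t + k) = bfun t := by
      intro t
      rw [hbfun]
      simp only
      erw [pow_add, Equiv.Perm.mul_apply, hfixp]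
    obtain ⟨e, he⟩ := hsame
    have hfact : ∀ t : ℕ, S ((σ₂p ^ t) (τ.obj i)) ((σ₂p ^ t) (τ.obj j))
        = bfun t * (bfun (t + e))⁻¹ := by
      intro t
      rw [hb ((σ₂p ^ t) (τ.obj i)) ((σ₂p ^ t) (τ.obj j))]
      have harg : (σ₂p ^ t) (τ.obj j) = (σ₂p ^ (t + e)) (τ.obj i) := by
        erw [← he, ← Equiv.Perm.mul_apply, ← pow_add]
      rw [harg]
    have hprod : (∏ t ∈ Finset.range k, S ((σ₂p ^ t) (τ.obj i)) ((σ₂p ^ t) (τ.obj j))) = 1 := by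
      rw [Finset.prod_congr rfl (fun t _ => hfact t), Finset.prod_mul_distrib,
        Finset.prod_inv_distrib, prod_shift_of_periodic bfun k hbne hbper e]
      exact mul_inv_cancel₀ (Finset.prod_ne_zero_iff.2 (fun t _ => hbne t))
    rw [hprod, mul_one] at hkey
    have := mul_right_cancel₀ (hTne i j) (hkey.trans (one_mul (T i j)).symm)
    exact this
  refine ⟨hpart1, ?_⟩
  -- part 2
  have hApos : 0 < orbitSize σ₁p i := orbitSize_pos i
  have hBpos : 0 < orbitSize σ₁p j := orbitSize_pos j
  have ha0 : a i j ≠ 0 := hx3 i j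
  have haL : a i j ^ Nat.lcm (orbitSize σ₁p i) (orbitSize σ₁p j) = 1 :=
    hpart1 _ (Nat.dvd_lcm_left _ _) (Nat.dvd_lcm_right _ _)
  have haLu : (Units.mk0 (a i j) ha0) ^ Nat.lcm (orbitSize σ₁p i) (orbitSize σ₁p j) = 1 := by
    ext
    rw [Units.val_pow_eq_pow_val, Units.val_mk0, Units.val_one]
    exact haL
  obtain ⟨μ, lam, hmuA', hlamB', hμlam⟩ :=
    exists_mu_lam (orbitSize σ₁p i) (orbitSize σ₁p j) hApos hBpos (Units.mk0 (a i j) ha0) haLu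
  have hmu : (μ : K) ≠ 0 := μ.ne_zero
  have hlm : (lam : K) ≠ 0 := lam.ne_zero
  have hmuA : (μ : K) ^ orbitSize σ₁p i = 1 := by
    rw [← Units.val_pow_eq_pow_val, hmuA', Units.val_one]
  have hlmB : (lam : K) ^ orbitSize σ₁p j = 1 := by
    rw [← Units.val_pow_eq_pow_val, hlamB', Units.val_one]
  have hrel : (μ : K) * ((lam : K))⁻¹ = a i j := by
    have h := congrArg Units.val hμlam
    rw [Units.val_mul, Units.val_mk0] at h
    rw [← h, Units.val_inv_eq_inv_val]
  obtain ⟨c, hc0, hcA, hcB, hcR⟩ := exists_c σ₁p i j hdiff (μ : K) (lam : K) hmu hlm hmuA hlmB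
  have hci : c i = 1 := by have h := hcA 0; simpa using h
  have hcsi : c (σ₁p i) = (μ : K) := by
    have h := hcA 1; rw [pow_one] at h; simpa using h
  have hcj : c j = 1 := by have h := hcB 0; simpa using h
  have hcsj : c (σ₁p j) = (lam : K) := by
    have h := hcB 1; rw [pow_one] at h; simpa using h
  refine ⟨fun u v => c u * (c v)⁻¹ * x u v,
    fun u v => a u v * ((c u * (c (σ₁p u))⁻¹) * ((c v * (c (σ₁p v))⁻¹))⁻¹), ⟨?_, ?_, ?_, ?_, ?_⟩, ?_⟩
  · intro u v
    exact mul_ne_zero (mul_ne_zero (hc0 u) (inv_ne_zero (hc0 v))) (hx1 u v)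
  · intro u v w
    dsimp only
    rw [← hx2 u v w]
    have hv := hc0 v
    calc c u * (c v)⁻¹ * x u v * (c v * (c w)⁻¹ * x v w)
        = c u * (c w)⁻¹ * (x u v * x v w) * ((c v)⁻¹ * c v) := by ring
      _ = c u * (c w)⁻¹ * (x u v * x v w) := by rw [inv_mul_cancel₀ hv, mul_one]
  · intro u v
    exact mul_ne_zero (hx3 u v) (mul_ne_zero (mul_ne_zero (hc0 u) (inv_ne_zero (hc0 (σ₁p u))))
      (inv_ne_zero (mul_ne_zero (hc0 v) (inv_ne_zero (hc0 (σ₁p v))))))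
  · intro u v
    apply hom_ext
    dsimp only
    rw [map_CnHom_mul σ₁ hσ₁l _ _ (c u * (c v)⁻¹) (x u v), hx4 u v, toK_CnHom, toK_CnHom]
    have h1 := hc0 u
    have h2 := hc0 v
    have h3 := hc0 (σ₁p u)
    have h4 := hc0 (σ₁p v)
    field_simp
  · intro u v huv
    dsimp only
    rw [hx5 u v huv, one_mul, hcR u v huv]
    exact mul_inv_cancel₀ (mul_ne_zero (hc0 v) (inv_ne_zero (hc0 (σ₁p v))))
  · dsimp only
    rw [hci, hcsi, hcj, hcsj, one_mul, one_mul, ← hrel]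
    field_simp
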